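/- For the Lagrange basis of the five/six-point stencil, B(x_{ij},τ)φ₀₀ = τ(1 - 2λ²/3), B(x_{ij},τ)φ₋₁,₋₁ = 0, and B(x_{ij},τ)φ_{±1,0} = B(x_{ij},τ)φ_{0,±1} = τλ²/6, where λ = cτ/h. -/

import Mathlib

open MeasureTheory

/-- The operator B(x,τ)f = (τ/2π) ∫_{|z|<1} f(x+cτz)/√(1-|z|²) dz. -/
noncomputable def Bop (c τ : ℝ) (x : ℝ × ℝ) (f : ℝ × ℝ → ℝ) : ℝ :=
  (τ / (2 * Real.pi)) * ∫ z in {z : ℝ × ℝ | z.1 ^ 2 + z.2 ^ 2 < 1},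
    f (x.1 + c * τ * z.1, x.2 + c * τ * z.2) / Real.sqrt (1 - (z.1 ^ 2 + z.2 ^ 2))

/-- The six Lagrange basis functions of the five/six-point stencil. -/
noncomputable def phi5 (h : ℝ) (q : ℤ × ℤ) (x : ℝ × ℝ) : ℝ :=
  if q = (0, 0) then 1 + x.1 * x.2 / h ^ 2 - x.1 ^ 2 / h ^ 2 - x.2 ^ 2 / h ^ 2
  else if q = (-1, 0) then -x.1 / (2 * h) - x.1 * x.2 / h ^ 2 + x.1 ^ 2 / (2 * h ^ 2)
  else if q = (0, -1) then -x.2 / (2 * h) - x.1 * x.2 / h ^ 2 + x.2 ^ 2 / (2 * h ^ 2)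
  else if q = (-1, -1) then x.1 * x.2 / h ^ 2
  else if q = (1, 0) then x.1 / (2 * h) + x.1 ^ 2 / (2 * h ^ 2)
  else if q = (0, 1) then x.2 / (2 * h) + x.2 ^ 2 / (2 * h ^ 2)
  else 0

/-!
In polar coordinates the weight `1 / √(1 - |z|²)` of `B` becomes `r / √(1 - r²)`. Over the circle
of radius `r` the quadratic `a + b₁ x₁ + b₂ x₂ + d x₁ x₂ + e₁ x₁² + e₂ x₂²` integrates to
`2π a + π (e₁ + e₂) r²`, and `∫₀¹ r / √(1 - r²) dr = 1`, `∫₀¹ r³ / √(1 - r²) dr = 2/3`.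
Hence `B(x, τ) q = τ (q x + (cτ)² (e₁ + e₂) / 3)` for every such quadratic `q`, and the six values
are read off from the coefficients of the Lagrange basis functions.
-/

open Real Set

def quadraticPoly (a b₁ b₂ d e₁ e₂ : ℝ) (x : ℝ × ℝ) : ℝ :=
  a + b₁ * x.1 + b₂ * x.2 + d * (x.1 * x.2) + e₁ * x.1 ^ 2 + e₂ * x.2 ^ 2

theorem integral_quadraticPoly_circle (a b₁ b₂ d e₁ e₂ r : ℝ) :
    ∫ θ in -π..π, quadraticPoly a b₁ b₂ d e₁ e₂ (r * cos θ, r * sin θ)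
      = 2 * π * a + π * (e₁ + e₂) * r ^ 2 := by
  have hsc : ∀ θ, r * cos θ * (r * sin θ) = r ^ 2 * (sin θ * cos θ) := fun θ => by ring
  simp only [quadraticPoly, mul_pow, hsc]
  rw [intervalIntegral.integral_add, intervalIntegral.integral_add, intervalIntegral.integral_add,
    intervalIntegral.integral_add, intervalIntegral.integral_add] <;>
    try exact Continuous.intervalIntegrable (by fun_prop) _ _
  simp only [intervalIntegral.integral_const, intervalIntegral.integral_const_mul, integral_cos,
    integral_sin, integral_sin_sq, integral_cos_sq, integral_sin_mul_cos₁, sin_neg, cos_neg,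
    sin_pi, cos_pi, smul_eq_mul]
  ring

theorem hasDerivAt_sqrt_one_sub_sq {x : ℝ} (hx : x ^ 2 < 1) :
    HasDerivAt (fun r => √(1 - r ^ 2)) (-x * (√(1 - x ^ 2))⁻¹) x := by
  have := ((hasDerivAt_pow 2 x).const_sub 1).sqrt (by linarith)
  convert this using 1
  field_simp
  ring

theorem integrableOn_mul_inv_sqrt_one_sub_sq :
    IntegrableOn (fun r => r * (√(1 - r ^ 2))⁻¹) (Ioc 0 1) := by
  refine intervalIntegral.integrableOn_deriv_of_nonneg (g := fun r => -√(1 - r ^ 2))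
    (by fun_prop) (fun x hx => ?_) (fun x hx => ?_)
  · have hx2 : x ^ 2 < 1 := pow_lt_one₀ hx.1.le hx.2 two_ne_zero
    exact (hasDerivAt_sqrt_one_sub_sq hx2).neg.congr_deriv (by ring)
  · exact mul_nonneg hx.1.le (inv_nonneg.2 (sqrt_nonneg _))

theorem integral_radial_quadratic (α β : ℝ) :
    ∫ r in (0 : ℝ)..1, r * (√(1 - r ^ 2))⁻¹ * (α + β * r ^ 2) = α + 2 * β / 3 := by
  have hint : IntervalIntegrable (fun r => r * (√(1 - r ^ 2))⁻¹ * (α + β * r ^ 2)) volume 0 1 := by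
    rw [intervalIntegrable_iff_integrableOn_Ioc_of_le zero_le_one]
    exact integrableOn_mul_inv_sqrt_one_sub_sq.mul_continuousOn_of_subset
      (Continuous.continuousOn (by fun_prop)) measurableSet_Ioc isCompact_Icc Ioc_subset_Icc_self
  rw [intervalIntegral.integral_eq_sub_of_hasDerivAt_of_le zero_le_one
    (f := fun r => -√(1 - r ^ 2) * (α + β * (2 + r ^ 2) / 3)) (by fun_prop) (fun x hx => ?_) hint]
  · norm_num
    ring
  have hx2 : x ^ 2 < 1 := pow_lt_one₀ hx.1.le hx.2 two_ne_zero
  have hpos : 0 < 1 - x ^ 2 := by linarith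
  have hq : HasDerivAt (fun r : ℝ => α + β * (2 + r ^ 2) / 3) (β * (2 * x) / 3) x := by
    simpa using (((hasDerivAt_pow 2 x).const_add 2).const_mul β).div_const 3 |>.const_add α
  refine ((hasDerivAt_sqrt_one_sub_sq hx2).neg.mul hq).congr_deriv ?_
  have hsqrt := (sqrt_pos.2 hpos).ne'
  simp only [Pi.neg_apply]
  field_simp
  linear_combination (-(2 * β * x)) * sq_sqrt hpos.le

theorem polarCoord_symm_fst_sq_add_snd_sq (p : ℝ × ℝ) :
    (polarCoord.symm p).1 ^ 2 + (polarCoord.symm p).2 ^ 2 = p.1 ^ 2 := by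
  simp only [polarCoord_symm_apply]
  linear_combination p.1 ^ 2 * sin_sq_add_cos_sq p.2

theorem integral_unitDisk_mul_radial (f : ℝ × ℝ → ℝ) (hf : Continuous f) (w : ℝ → ℝ)
    (hw : IntegrableOn (fun r => r * w (r ^ 2)) (Ioo 0 1)) :
    ∫ z in {z : ℝ × ℝ | z.1 ^ 2 + z.2 ^ 2 < 1}, f z * w (z.1 ^ 2 + z.2 ^ 2)
      = ∫ r in Ioo 0 1, r * w (r ^ 2) * ∫ θ in Ioo (-π) π, f (r * cos θ, r * sin θ) := by
  set S : Set (ℝ × ℝ) := Ioo 0 1 ×ˢ Ioo (-π) π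
  set G : ℝ × ℝ → ℝ := fun p => p.1 * w (p.1 ^ 2) * f (polarCoord.symm p)
  have hpolar : ∀ p ∈ polarCoord.target,
      p.1 • {z : ℝ × ℝ | z.1 ^ 2 + z.2 ^ 2 < 1}.indicator (fun z => f z * w (z.1 ^ 2 + z.2 ^ 2))
        (polarCoord.symm p) = S.indicator G p := by
    rintro ⟨r, θ⟩ ⟨hr : 0 < r, hθ⟩
    have hmem : (r, θ) ∈ S ↔ polarCoord.symm (r, θ) ∈ {z : ℝ × ℝ | z.1 ^ 2 + z.2 ^ 2 < 1} := by
      simp only [S, mem_prod, mem_Ioo, mem_ofPred_eq, polarCoord_symm_fst_sq_add_snd_sq, hθ,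
        and_true]
      constructor
      · rintro ⟨-, h1⟩; nlinarith
      · intro h1; exact ⟨hr, by nlinarith⟩
    by_cases h : (r, θ) ∈ S
    · rw [indicator_of_mem h, indicator_of_mem (hmem.1 h), polarCoord_symm_fst_sq_add_snd_sq,
        smul_eq_mul]
      simp only [G]; ring
    · rw [indicator_of_notMem h, indicator_of_notMem (mt hmem.2 h), smul_zero]
  have hS : MeasurableSet S := measurableSet_Ioo.prod measurableSet_Ioo
  have hS_target : S ⊆ polarCoord.target := prod_mono Ioo_subset_Ioi_self subset_rfl
  have hG : IntegrableOn G S (volume.prod volume) := by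
    have hweight : IntegrableOn (fun p : ℝ × ℝ => p.1 * w (p.1 ^ 2)) S (volume.prod volume) := by
      rw [IntegrableOn, ← Measure.prod_restrict]
      simpa only [mul_one] using
        hw.mul_prod (integrableOn_const (C := (1 : ℝ)) measure_Ioo_lt_top.ne)
    exact hweight.mul_continuousOn_of_subset
      (hf.comp continuous_polarCoord_symm).continuousOn hS (isCompact_Icc.prod isCompact_Icc)
      (prod_mono Ioo_subset_Icc_self Ioo_subset_Icc_self)
  rw [← integral_indicator (measurableSet_lt (by fun_prop) measurable_const),
    ← integral_comp_polarCoord_symm,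
    setIntegral_congr_fun polarCoord.open_target.measurableSet hpolar,
    setIntegral_indicator hS, inter_eq_right.2 hS_target, Measure.volume_eq_prod,
    setIntegral_prod G hG]
  refine setIntegral_congr_fun measurableSet_Ioo fun r _ => ?_
  simp only [G, polarCoord_symm_apply]
  exact integral_const_mul _ _

theorem integral_unitDisk_quadraticPoly_div_sqrt (a b₁ b₂ d e₁ e₂ : ℝ) :
    ∫ z in {z : ℝ × ℝ | z.1 ^ 2 + z.2 ^ 2 < 1},
        quadraticPoly a b₁ b₂ d e₁ e₂ z / √(1 - (z.1 ^ 2 + z.2 ^ 2))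
      = 2 * π * a + 2 * π * (e₁ + e₂) / 3 := by
  have hpolar := integral_unitDisk_mul_radial (quadraticPoly a b₁ b₂ d e₁ e₂)
    (by unfold quadraticPoly; fun_prop) (fun s => (√(1 - s))⁻¹)
    (integrableOn_mul_inv_sqrt_one_sub_sq.mono_set Ioo_subset_Ioc_self)
  simp_rw [div_eq_mul_inv, hpolar, ← integral_Ioc_eq_integral_Ioo,
    ← intervalIntegral.integral_of_le (neg_le_self pi_pos.le), integral_quadraticPoly_circle]
  rw [← intervalIntegral.integral_of_le zero_le_one, integral_radial_quadratic]
  ring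

theorem Bop_quadraticPoly (c τ : ℝ) (x : ℝ × ℝ) (a b₁ b₂ d e₁ e₂ : ℝ) :
    Bop c τ x (quadraticPoly a b₁ b₂ d e₁ e₂)
      = τ * (quadraticPoly a b₁ b₂ d e₁ e₂ x + (c * τ) ^ 2 * (e₁ + e₂) / 3) := by
  have hshift (s : ℝ) (z : ℝ × ℝ) :
      quadraticPoly a b₁ b₂ d e₁ e₂ (x.1 + s * z.1, x.2 + s * z.2)
        = quadraticPoly (quadraticPoly a b₁ b₂ d e₁ e₂ x) (s * (b₁ + d * x.2 + 2 * e₁ * x.1))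
            (s * (b₂ + d * x.1 + 2 * e₂ * x.2)) (s ^ 2 * d) (s ^ 2 * e₁) (s ^ 2 * e₂) z := by
    simp only [quadraticPoly]
    ring
  rw [Bop]
  simp_rw [hshift, integral_unitDisk_quadraticPoly_div_sqrt]
  field_simp

theorem Bop_phi5_general (c τ h : ℝ) :
    Bop c τ (0, 0) (phi5 h (0, 0)) = τ * (1 - 2 * (c * τ / h) ^ 2 / 3) ∧
    Bop c τ (0, 0) (phi5 h (-1, -1)) = 0 ∧
    Bop c τ (0, 0) (phi5 h (1, 0)) = τ * (c * τ / h) ^ 2 / 6 ∧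
    Bop c τ (0, 0) (phi5 h (-1, 0)) = τ * (c * τ / h) ^ 2 / 6 ∧
    Bop c τ (0, 0) (phi5 h (0, 1)) = τ * (c * τ / h) ^ 2 / 6 ∧
    Bop c τ (0, 0) (phi5 h (0, -1)) = τ * (c * τ / h) ^ 2 / 6 := by
  have hBop (q : ℤ × ℤ) (a b₁ b₂ d e₁ e₂ : ℝ) (hq : phi5 h q = quadraticPoly a b₁ b₂ d e₁ e₂) :
      Bop c τ (0, 0) (phi5 h q) = τ * (a + (c * τ) ^ 2 * (e₁ + e₂) / 3) := by
    rw [hq, Bop_quadraticPoly]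
    simp [quadraticPoly]
  refine ⟨?_, ?_, ?_, ?_, ?_, ?_⟩
  · rw [hBop _ 1 0 0 (1 / h ^ 2) (-1 / h ^ 2) (-1 / h ^ 2)
      (by ext; simp [phi5, quadraticPoly]; ring)]
    ring
  · rw [hBop _ 0 0 0 (1 / h ^ 2) 0 0 (by ext; simp [phi5, quadraticPoly]; ring)]
    ring
  · rw [hBop _ 0 (1 / (2 * h)) 0 0 (1 / (2 * h ^ 2)) 0 (by ext; simp [phi5, quadraticPoly]; ring)]
    ring
  · rw [hBop _ 0 (-1 / (2 * h)) 0 (-1 / h ^ 2) (1 / (2 * h ^ 2)) 0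
      (by ext; simp [phi5, quadraticPoly]; ring)]
    ring
  · rw [hBop _ 0 0 (1 / (2 * h)) 0 0 (1 / (2 * h ^ 2)) (by ext; simp [phi5, quadraticPoly]; ring)]
    ring
  · rw [hBop _ 0 0 (-1 / (2 * h)) (-1 / h ^ 2) 0 (1 / (2 * h ^ 2))
      (by ext; simp [phi5, quadraticPoly]; ring)]
    ring

/-- Values of B on the Lagrange basis of the five/six-point stencil, λ = cτ/h. -/
theorem Bop_phi5 (c τ h : ℝ) (hc : 0 < c) (hτ : 0 < τ) (hh : 0 < h) :
    Bop c τ (0, 0) (phi5 h (0, 0)) = τ * (1 - 2 * (c * τ / h) ^ 2 / 3) ∧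
    Bop c τ (0, 0) (phi5 h (-1, -1)) = 0 ∧
    Bop c τ (0, 0) (phi5 h (1, 0)) = τ * (c * τ / h) ^ 2 / 6 ∧
    Bop c τ (0, 0) (phi5 h (-1, 0)) = τ * (c * τ / h) ^ 2 / 6 ∧
    Bop c τ (0, 0) (phi5 h (0, 1)) = τ * (c * τ / h) ^ 2 / 6 ∧
    Bop c τ (0, 0) (phi5 h (0, -1)) = τ * (c * τ / h) ^ 2 / 6 :=
  Bop_phi5_general c τ h
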